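/- Let n ≥ 1, let Y = [0,1)ⁿ, let χ₁ : Y → {0,1} be measurable, χ₂ = 1 − χ₁, θᵢ = ∫_Y χᵢ dy, let 0 < σ₁, σ₂ < ∞ and 1 < p₁ ≤ p₂, and let A(y, ζ) = σ(y) |ζ|^{p(y)−2} ζ with σ(y) = χ₁(y)σ₁ + χ₂(y)σ₂ and p(y) = χ₁(y)p₁ + χ₂(y)p₂ (and A(y,0) = 0). There exists a constant C > 0, depending only on n, σ₁, σ₂, p₁, p₂, such that the following holds: for every ξ ∈ ℝⁿ and every measurable vector field V : Y → ℝⁿ satisfying the cell-problem energy identity ∫_Y ⟨A(y, V(y)), V(y)⟩ dy = ∫_Y ⟨A(y, V(y)), ξ⟩ dy (with both sides finite), one has ∫_Y χ₁(y) |V(y)|^{p₁} dy + ∫_Y χ₂(y) |V(y)|^{p₂} dy ≤ C (1 + |ξ|^{p₁} θ₁ + |ξ|^{p₂} θ₂). (This is Lemma 3.1, the a priori bound for the corrector field P(·, ξ) = ξ + ∇υ_ξ, stated with the energy identity—which the cell problem provides—taken as a hypothesis.) -/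

import Mathlib

open MeasureTheory Classical
open scoped ENNReal NNReal

/-- The unit period cell `Y = [0,1)ⁿ`. -/
def unitCell (n : ℕ) : Set (EuclideanSpace ℝ (Fin n)) :=
  {y | ∀ i, y i ∈ Set.Ico (0 : ℝ) 1}

/-- The two-phase power-law constitutive map
`A(y, ζ) = σ(y) |ζ|^{p(y)−2} ζ` (with `A(y, 0) = 0`), where
`σ(y) = χ₁(y)σ₁ + χ₂(y)σ₂` and `p(y) = χ₁(y)p₁ + χ₂(y)p₂`, `χ₂ = 1 − χ₁`. -/
noncomputable def twoPhaseA (n : ℕ) (σ₁ σ₂ p₁ p₂ : ℝ)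
    (χ₁ : EuclideanSpace ℝ (Fin n) → ℝ) (y ζ : EuclideanSpace ℝ (Fin n)) :
    EuclideanSpace ℝ (Fin n) :=
  if ζ = 0 then 0 else
    ((χ₁ y * σ₁ + (1 - χ₁ y) * σ₂) *
      ‖ζ‖ ^ (χ₁ y * p₁ + (1 - χ₁ y) * p₂ - 2)) • ζ

/-!
Testing the energy identity `∫ ⟨A(V), V⟩ = ∫ ⟨A(V), ξ⟩` against the pointwise coercivity
`⟨A(y, ζ), ζ⟩ ≥ min σᵢ · |ζ|^{p(y)}` and the growth bound
`|⟨A(y, ζ), ξ⟩| ≤ max σᵢ · |ζ|^{p(y)-1} |ξ|`, Young's inequality with a small parameter lets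
half of the left side absorb the `|ζ|^{p(y)}`-part of the right side, leaving
`∫ |V|^{p(y)} ≲ ∫ |ξ|^{p(y)}`.
-/

lemma rpow_sub_one_mul_self {t p : ℝ} (ht : 0 ≤ t) (hp : 0 < p) :
    t ^ (p - 1) * t = t ^ p := by
  rcases ht.eq_or_lt with rfl | ht
  · simp [Real.zero_rpow hp.ne']
  · rw [Real.rpow_sub_one ht.ne', div_mul_cancel₀ _ ht.ne']

lemma rpow_sub_one_mul_le {t u ε p : ℝ} (ht : 0 ≤ t) (hu : 0 ≤ u) (hε : 0 < ε)
    (hp : 1 ≤ p) :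
    t ^ (p - 1) * u ≤ ε * t ^ p + ε⁻¹ ^ (p - 1) * u ^ p := by
  rcases le_or_gt u (ε * t) with hut | htu
  · have : t ^ (p - 1) * u ≤ ε * t ^ p :=
      calc t ^ (p - 1) * u ≤ t ^ (p - 1) * (ε * t) := by gcongr
        _ = ε * t ^ p := by rw [mul_left_comm, rpow_sub_one_mul_self ht (by linarith)]
    linarith [show 0 ≤ ε⁻¹ ^ (p - 1) * u ^ p by positivity]
  · have htu' : t ≤ ε⁻¹ * u := by
      rw [inv_mul_eq_div, le_div_iff₀' hε]; exact htu.le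
    have : t ^ (p - 1) * u ≤ ε⁻¹ ^ (p - 1) * u ^ p :=
      calc t ^ (p - 1) * u ≤ (ε⁻¹ * u) ^ (p - 1) * u := by gcongr
        _ = ε⁻¹ ^ (p - 1) * u ^ p := by
          rw [Real.mul_rpow (by positivity) hu, mul_assoc, rpow_sub_one_mul_self hu (by linarith)]
    linarith [show 0 ≤ ε * t ^ p by positivity]

section PowerLaw

variable {E : Type*} [NormedAddCommGroup E] [InnerProductSpace ℝ E]

noncomputable def powerLawFlux (s q : ℝ) (ζ : E) : E :=
  if ζ = 0 then 0 else (s * ‖ζ‖ ^ (q - 2)) • ζ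

lemma inner_powerLawFlux_self (s : ℝ) {q : ℝ} (hq : q ≠ 0) (ζ : E) :
    inner ℝ (powerLawFlux s q ζ) ζ = s * ‖ζ‖ ^ q := by
  by_cases hζ : ζ = 0
  · simp [powerLawFlux, hζ, Real.zero_rpow hq]
  have hpos : 0 < ‖ζ‖ := norm_pos_iff.mpr hζ
  rw [powerLawFlux, if_neg hζ, real_inner_smul_left, real_inner_self_eq_norm_sq,
    ← Real.rpow_natCast ‖ζ‖ 2, mul_assoc, ← Real.rpow_add hpos]
  norm_num

lemma abs_inner_powerLawFlux_le {s : ℝ} (hs : 0 ≤ s) (q : ℝ) (ζ ξ : E) :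
    |inner ℝ (powerLawFlux s q ζ) ξ| ≤ s * (‖ζ‖ ^ (q - 1) * ‖ξ‖) := by
  by_cases hζ : ζ = 0
  · simp only [powerLawFlux, hζ, if_true, inner_zero_left, abs_zero]
    positivity
  have hpos : 0 < ‖ζ‖ := norm_pos_iff.mpr hζ
  rw [powerLawFlux, if_neg hζ, real_inner_smul_left, abs_mul, abs_of_nonneg (by positivity)]
  calc s * ‖ζ‖ ^ (q - 2) * |inner ℝ ζ ξ| ≤ s * ‖ζ‖ ^ (q - 2) * (‖ζ‖ * ‖ξ‖) := by
        gcongr; exact abs_real_inner_le_norm ζ ξ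
    _ = s * (‖ζ‖ ^ (q - 1) * ‖ξ‖) := by
        rw [show q - 1 = q - 2 + 1 by ring, Real.rpow_add hpos, Real.rpow_one]; ring

/-- Young's inequality with `ε = m / (2M)`; the constant is `M ε^{1-p} ≥ M ε^{1-q}`. -/
lemma abs_inner_powerLawFlux_le_absorb {m s M q p : ℝ} (hm : 0 < m) (hms : m ≤ s)
    (hsM : s ≤ M) (hq : 1 ≤ q) (hqp : q ≤ p) (ζ ξ : E) :
    |inner ℝ (powerLawFlux s q ζ) ξ| ≤
      m / 2 * ‖ζ‖ ^ q + M * (2 * M / m) ^ (p - 1) * ‖ξ‖ ^ q := by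
  have hM : 0 < M := by linarith
  set ε := m / (2 * M) with hε_def
  have hε : 0 < ε := by positivity
  have hε_inv : ε⁻¹ = 2 * M / m := by rw [hε_def, inv_div]
  have hε_inv_one : 1 ≤ ε⁻¹ := by rw [hε_inv, le_div_iff₀ hm]; linarith
  calc |inner ℝ (powerLawFlux s q ζ) ξ|
      ≤ s * (‖ζ‖ ^ (q - 1) * ‖ξ‖) := abs_inner_powerLawFlux_le (by linarith) q ζ ξ
    _ ≤ M * (ε * ‖ζ‖ ^ q + ε⁻¹ ^ (q - 1) * ‖ξ‖ ^ q) :=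
        mul_le_mul hsM (rpow_sub_one_mul_le (norm_nonneg ζ) (norm_nonneg ξ) hε hq)
          (by positivity) hM.le
    _ ≤ M * (ε * ‖ζ‖ ^ q + ε⁻¹ ^ (p - 1) * ‖ξ‖ ^ q) := by gcongr
    _ = m / 2 * ‖ζ‖ ^ q + M * (2 * M / m) ^ (p - 1) * ‖ξ‖ ^ q := by
        rw [← hε_inv, hε_def]; field_simp

end PowerLaw

section TwoPhase

/-- `|ζ|^{p(y)}` written through the phase indicator `a = χ₁(y)`. -/
noncomputable def twoPhasePow (p₁ p₂ a t : ℝ) : ℝ := a * t ^ p₁ + (1 - a) * t ^ p₂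

variable {n : ℕ} {σ₁ σ₂ p₁ p₂ : ℝ} {χ₁ : EuclideanSpace ℝ (Fin n) → ℝ}
  {y : EuclideanSpace ℝ (Fin n)}

lemma twoPhasePow_nonneg {a t : ℝ} (ha₀ : 0 ≤ a) (ha₁ : a ≤ 1) (ht : 0 ≤ t) :
    0 ≤ twoPhasePow p₁ p₂ a t := by
  have : 0 ≤ 1 - a := by linarith
  unfold twoPhasePow; positivity

lemma ofReal_twoPhasePow {a t : ℝ} (ha₀ : 0 ≤ a) (ha₁ : a ≤ 1) (ht : 0 ≤ t)
    (hp₁ : 0 ≤ p₁) (hp₂ : 0 ≤ p₂) :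
    ENNReal.ofReal a * ENNReal.ofReal t ^ p₁ + ENNReal.ofReal (1 - a) * ENNReal.ofReal t ^ p₂ =
      ENNReal.ofReal (twoPhasePow p₁ p₂ a t) := by
  rw [twoPhasePow, ENNReal.ofReal_rpow_of_nonneg ht hp₁, ENNReal.ofReal_rpow_of_nonneg ht hp₂,
    ← ENNReal.ofReal_mul ha₀, ← ENNReal.ofReal_mul (by linarith),
    ENNReal.ofReal_add (by positivity) (mul_nonneg (by linarith) (by positivity))]

lemma twoPhaseA_of_eq_one (h : χ₁ y = 1) :
    twoPhaseA n σ₁ σ₂ p₁ p₂ χ₁ y = powerLawFlux σ₁ p₁ := by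
  ext1 ζ; simp [twoPhaseA, powerLawFlux, h]

lemma twoPhaseA_of_eq_zero (h : χ₁ y = 0) :
    twoPhaseA n σ₁ σ₂ p₁ p₂ χ₁ y = powerLawFlux σ₂ p₂ := by
  ext1 ζ; simp [twoPhaseA, powerLawFlux, h]

lemma min_mul_twoPhasePow_le_inner_twoPhaseA (hp₁ : p₁ ≠ 0) (hp₂ : p₂ ≠ 0)
    (hχ : χ₁ y = 0 ∨ χ₁ y = 1) (ζ : EuclideanSpace ℝ (Fin n)) :
    min σ₁ σ₂ * twoPhasePow p₁ p₂ (χ₁ y) ‖ζ‖ ≤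
      inner ℝ (twoPhaseA n σ₁ σ₂ p₁ p₂ χ₁ y ζ) ζ := by
  rcases hχ with h | h
  · rw [twoPhaseA_of_eq_zero h, inner_powerLawFlux_self _ hp₂]
    simp only [twoPhasePow, h]
    nlinarith [min_le_right σ₁ σ₂, Real.rpow_nonneg (norm_nonneg ζ) p₂]
  · rw [twoPhaseA_of_eq_one h, inner_powerLawFlux_self _ hp₁]
    simp only [twoPhasePow, h]
    nlinarith [min_le_left σ₁ σ₂, Real.rpow_nonneg (norm_nonneg ζ) p₁]

lemma abs_inner_twoPhaseA_le (hσ₁ : 0 < σ₁) (hσ₂ : 0 < σ₂) (hp₁ : 1 < p₁) (hp₁₂ : p₁ ≤ p₂)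
    (hχ : χ₁ y = 0 ∨ χ₁ y = 1) (ζ ξ : EuclideanSpace ℝ (Fin n)) :
    |inner ℝ (twoPhaseA n σ₁ σ₂ p₁ p₂ χ₁ y ζ) ξ| ≤
      min σ₁ σ₂ / 2 * twoPhasePow p₁ p₂ (χ₁ y) ‖ζ‖ +
        max σ₁ σ₂ * (2 * max σ₁ σ₂ / min σ₁ σ₂) ^ (p₂ - 1) * twoPhasePow p₁ p₂ (χ₁ y) ‖ξ‖ := by
  have hm : 0 < min σ₁ σ₂ := lt_min hσ₁ hσ₂
  rcases hχ with h | h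
  · rw [twoPhaseA_of_eq_zero h]
    simpa [twoPhasePow, h] using abs_inner_powerLawFlux_le_absorb hm (min_le_right σ₁ σ₂)
      (le_max_right σ₁ σ₂) (by linarith) le_rfl ζ ξ
  · rw [twoPhaseA_of_eq_one h]
    simpa [twoPhasePow, h] using abs_inner_powerLawFlux_le_absorb hm (min_le_left σ₁ σ₂)
      (le_max_left σ₁ σ₂) hp₁.le hp₁₂ ζ ξ

end TwoPhase

lemma integrable_and_integral_le_of_absorb {α : Type*} [MeasurableSpace α] {μ : Measure α}
    {F G W Ξ : α → ℝ} {m c : ℝ} (hm : 0 < m) (hF : Integrable F μ) (hΞ : Integrable Ξ μ)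
    (hW : AEStronglyMeasurable W μ) (hW₀ : ∀ x, 0 ≤ W x) (hFW : ∀ x, m * W x ≤ F x)
    (hGW : ∀ x, |G x| ≤ m / 2 * W x + c * Ξ x) (hFG : ∫ x, F x ∂μ = ∫ x, G x ∂μ) :
    Integrable W μ ∧ ∫ x, W x ∂μ ≤ 2 * c / m * ∫ x, Ξ x ∂μ := by
  have hWF : ∀ x, ‖W x‖ ≤ m⁻¹ * F x := fun x => by
    rw [Real.norm_of_nonneg (hW₀ x), le_inv_mul_iff₀ hm]; exact hFW x
  have hW_int : Integrable W μ := (hF.const_mul m⁻¹).mono' hW (ae_of_all _ hWF)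
  have hbound_int : Integrable (fun x => m / 2 * W x + c * Ξ x) μ :=
    (hW_int.const_mul _).add (hΞ.const_mul _)
  have key : m * ∫ x, W x ∂μ ≤ m / 2 * ∫ x, W x ∂μ + c * ∫ x, Ξ x ∂μ :=
    calc m * ∫ x, W x ∂μ = ∫ x, m * W x ∂μ := (integral_const_mul m W).symm
      _ ≤ ∫ x, F x ∂μ := integral_mono (hW_int.const_mul m) hF hFW
      _ = ∫ x, G x ∂μ := hFG
      _ ≤ ∫ x, |G x| ∂μ := (le_abs_self _).trans (abs_integral_le_integral_abs)
      _ ≤ ∫ x, (m / 2 * W x + c * Ξ x) ∂μ :=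
          integral_mono_of_nonneg (ae_of_all _ fun x => abs_nonneg _) hbound_int (ae_of_all _ hGW)
      _ = m / 2 * ∫ x, W x ∂μ + c * ∫ x, Ξ x ∂μ := by
          rw [integral_add (hW_int.const_mul _) (hΞ.const_mul _), integral_const_mul,
            integral_const_mul]
  refine ⟨hW_int, ?_⟩
  rw [div_mul_eq_mul_div, le_div_iff₀ hm]
  linarith

lemma lintegral_add_eq_ofReal_integral_twoPhasePow {α E : Type*} [MeasurableSpace α]
    [NormedAddCommGroup E] [MeasurableSpace E] [OpensMeasurableSpace E] {μ : Measure α}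
    {p₁ p₂ : ℝ} {a : α → ℝ} {v : α → E} (ha : Measurable a) (hv : Measurable v)
    (ha₀ : ∀ x, 0 ≤ a x) (ha₁ : ∀ x, a x ≤ 1) (hp₁ : 0 ≤ p₁) (hp₂ : 0 ≤ p₂)
    (hint : Integrable (fun x => twoPhasePow p₁ p₂ (a x) ‖v x‖) μ) :
    (∫⁻ x, ENNReal.ofReal (a x) * (‖v x‖₊ : ℝ≥0∞) ^ p₁ ∂μ) +
        ∫⁻ x, ENNReal.ofReal (1 - a x) * (‖v x‖₊ : ℝ≥0∞) ^ p₂ ∂μ =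
      ENNReal.ofReal (∫ x, twoPhasePow p₁ p₂ (a x) ‖v x‖ ∂μ) := by
  rw [← lintegral_add_left (by fun_prop), ofReal_integral_eq_lintegral_ofReal hint
    (ae_of_all _ fun x => twoPhasePow_nonneg (ha₀ x) (ha₁ x) (norm_nonneg _))]
  refine lintegral_congr fun x => ?_
  rw [← enorm_eq_nnnorm, ← ofReal_norm]
  exact ofReal_twoPhasePow (ha₀ x) (ha₁ x) (norm_nonneg _) hp₁ hp₂

lemma unitCell_eq_preimage (n : ℕ) :
    unitCell n = (MeasurableEquiv.toLp 2 (Fin n → ℝ)).symm ⁻¹'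
      Set.univ.pi fun _ => Set.Ico (0 : ℝ) 1 := by
  ext y
  simp only [unitCell, Set.mem_preimage, Set.mem_univ_pi]
  rfl

lemma volume_unitCell (n : ℕ) : volume (unitCell n) = 1 := by
  rw [unitCell_eq_preimage,
    (EuclideanSpace.volume_preserving_symm_measurableEquiv_toLp (Fin n)).measure_preimage
      (MeasurableSet.univ_pi fun _ => measurableSet_Ico).nullMeasurableSet]
  simp [volume_pi_pi, Real.volume_Ico]

instance isFiniteMeasure_restrict_unitCell (n : ℕ) :
    IsFiniteMeasure (volume.restrict (unitCell n)) :=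
  isFiniteMeasure_restrict.mpr (by simp [volume_unitCell])

section FiniteMeasure

variable {α : Type*} [MeasurableSpace α] {μ : Measure α} [IsFiniteMeasure μ] {a : α → ℝ}
  {p₁ p₂ : ℝ}

lemma integrable_of_mem_Icc (ha : Measurable a) (ha₀ : ∀ x, 0 ≤ a x) (ha₁ : ∀ x, a x ≤ 1) :
    Integrable a μ :=
  Integrable.of_bound ha.aestronglyMeasurable 1
    (ae_of_all _ fun x => by rw [Real.norm_of_nonneg (ha₀ x)]; exact ha₁ x)

lemma integrable_twoPhasePow_const (ha : Measurable a) (ha₀ : ∀ x, 0 ≤ a x)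
    (ha₁ : ∀ x, a x ≤ 1) (t : ℝ) :
    Integrable (fun x => twoPhasePow p₁ p₂ (a x) t) μ :=
  have h := integrable_of_mem_Icc (μ := μ) ha ha₀ ha₁
  have h' : Integrable (fun x => 1 - a x) μ := (integrable_const 1).sub h
  (h.mul_const _).add (h'.mul_const _)

lemma integral_twoPhasePow_const (ha : Measurable a) (ha₀ : ∀ x, 0 ≤ a x)
    (ha₁ : ∀ x, a x ≤ 1) (t : ℝ) :
    ∫ x, twoPhasePow p₁ p₂ (a x) t ∂μ =
      t ^ p₁ * ∫ x, a x ∂μ + t ^ p₂ * ∫ x, (1 - a x) ∂μ := by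
  have h := integrable_of_mem_Icc (μ := μ) ha ha₀ ha₁
  have h' : Integrable (fun x => 1 - a x) μ := (integrable_const 1).sub h
  simp only [twoPhasePow]
  rw [integral_add (h.mul_const _) (h'.mul_const _),
    integral_mul_const, integral_mul_const, mul_comm _ (t ^ p₁), mul_comm _ (t ^ p₂)]

end FiniteMeasure

theorem corrector_apriori_bound_general (n : ℕ) (σ₁ σ₂ p₁ p₂ : ℝ)
    (hσ₁ : 0 < σ₁) (hσ₂ : 0 < σ₂) (hp₁ : 1 < p₁) (hp₁₂ : p₁ ≤ p₂) :
    ∃ C : ℝ, 0 < C ∧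
      ∀ χ₁ : EuclideanSpace ℝ (Fin n) → ℝ, Measurable χ₁ →
        (∀ y, χ₁ y = 0 ∨ χ₁ y = 1) →
      ∀ (ξ : EuclideanSpace ℝ (Fin n))
        (V : EuclideanSpace ℝ (Fin n) → EuclideanSpace ℝ (Fin n)), Measurable V →
        IntegrableOn
          (fun y => (inner ℝ (twoPhaseA n σ₁ σ₂ p₁ p₂ χ₁ y (V y)) (V y) : ℝ)) (unitCell n) →
        IntegrableOn
          (fun y => (inner ℝ (twoPhaseA n σ₁ σ₂ p₁ p₂ χ₁ y (V y)) ξ : ℝ)) (unitCell n) →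
        (∫ y in unitCell n, (inner ℝ (twoPhaseA n σ₁ σ₂ p₁ p₂ χ₁ y (V y)) (V y) : ℝ)) =
          (∫ y in unitCell n, (inner ℝ (twoPhaseA n σ₁ σ₂ p₁ p₂ χ₁ y (V y)) ξ : ℝ)) →
        (∫⁻ y in unitCell n, ENNReal.ofReal (χ₁ y) * (‖V y‖₊ : ℝ≥0∞) ^ p₁) +
          (∫⁻ y in unitCell n, ENNReal.ofReal (1 - χ₁ y) * (‖V y‖₊ : ℝ≥0∞) ^ p₂) ≤
          ENNReal.ofReal (C * (1 + ‖ξ‖ ^ p₁ * (∫ y in unitCell n, χ₁ y) +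
            ‖ξ‖ ^ p₂ * (∫ y in unitCell n, (1 - χ₁ y)))) := by
  have hm : 0 < min σ₁ σ₂ := lt_min hσ₁ hσ₂
  have hp₂ : 1 < p₂ := hp₁.trans_le hp₁₂
  set c := max σ₁ σ₂ * (2 * max σ₁ σ₂ / min σ₁ σ₂) ^ (p₂ - 1)
  have hc : 0 ≤ 2 * c / min σ₁ σ₂ := by positivity
  refine ⟨1 + 2 * c / min σ₁ σ₂, by positivity, ?_⟩
  intro χ₁ hχ hχ01 ξ V hV hF _ hFG
  have hχ₀ : ∀ y, 0 ≤ χ₁ y := fun y => by rcases hχ01 y with h | h <;> simp [h]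
  have hχ₁ : ∀ y, χ₁ y ≤ 1 := fun y => by rcases hχ01 y with h | h <;> simp [h]
  have hW : Measurable fun y => twoPhasePow p₁ p₂ (χ₁ y) ‖V y‖ := by
    unfold twoPhasePow; fun_prop
  obtain ⟨hW_int, hWΞ⟩ := integrable_and_integral_le_of_absorb
    (μ := volume.restrict (unitCell n)) (c := c) hm hF
    (integrable_twoPhasePow_const hχ hχ₀ hχ₁ ‖ξ‖) hW.aestronglyMeasurable
    (fun y => twoPhasePow_nonneg (hχ₀ y) (hχ₁ y) (norm_nonneg _))
    (fun y => min_mul_twoPhasePow_le_inner_twoPhaseA (zero_lt_one.trans hp₁).ne'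
      (zero_lt_one.trans hp₂).ne' (hχ01 y) (V y))
    (fun y => abs_inner_twoPhaseA_le hσ₁ hσ₂ hp₁ hp₁₂ (hχ01 y) (V y) ξ) hFG
  have hΞ₀ : 0 ≤ ∫ y in unitCell n, twoPhasePow p₁ p₂ (χ₁ y) ‖ξ‖ :=
    integral_nonneg fun y => twoPhasePow_nonneg (hχ₀ y) (hχ₁ y) (norm_nonneg _)
  rw [lintegral_add_eq_ofReal_integral_twoPhasePow hχ hV hχ₀ hχ₁ (by linarith) (by linarith)
    hW_int, add_assoc, ← integral_twoPhasePow_const hχ hχ₀ hχ₁ ‖ξ‖]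
  exact ENNReal.ofReal_le_ofReal (by nlinarith)

/-- Lemma 3.1: the a priori bound for the corrector field.  If `V` satisfies the
cell-problem energy identity `∫_Y ⟨A(y, V), V⟩ = ∫_Y ⟨A(y, V), ξ⟩`, then
`∫_Y χ₁|V|^{p₁} + ∫_Y χ₂|V|^{p₂} ≤ C (1 + |ξ|^{p₁}θ₁ + |ξ|^{p₂}θ₂)` with `C`
depending only on `n, σ₁, σ₂, p₁, p₂`. -/
theorem corrector_apriori_bound (n : ℕ) (hn : 1 ≤ n) (σ₁ σ₂ p₁ p₂ : ℝ)
    (hσ₁ : 0 < σ₁) (hσ₂ : 0 < σ₂) (hp₁ : 1 < p₁) (hp₁₂ : p₁ ≤ p₂) :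
    ∃ C : ℝ, 0 < C ∧
      ∀ χ₁ : EuclideanSpace ℝ (Fin n) → ℝ, Measurable χ₁ →
        (∀ y, χ₁ y = 0 ∨ χ₁ y = 1) →
      ∀ (ξ : EuclideanSpace ℝ (Fin n))
        (V : EuclideanSpace ℝ (Fin n) → EuclideanSpace ℝ (Fin n)), Measurable V →
        IntegrableOn
          (fun y => (inner ℝ (twoPhaseA n σ₁ σ₂ p₁ p₂ χ₁ y (V y)) (V y) : ℝ)) (unitCell n) →
        IntegrableOn
          (fun y => (inner ℝ (twoPhaseA n σ₁ σ₂ p₁ p₂ χ₁ y (V y)) ξ : ℝ)) (unitCell n) →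
        (∫ y in unitCell n, (inner ℝ (twoPhaseA n σ₁ σ₂ p₁ p₂ χ₁ y (V y)) (V y) : ℝ)) =
          (∫ y in unitCell n, (inner ℝ (twoPhaseA n σ₁ σ₂ p₁ p₂ χ₁ y (V y)) ξ : ℝ)) →
        (∫⁻ y in unitCell n, ENNReal.ofReal (χ₁ y) * (‖V y‖₊ : ℝ≥0∞) ^ p₁) +
          (∫⁻ y in unitCell n, ENNReal.ofReal (1 - χ₁ y) * (‖V y‖₊ : ℝ≥0∞) ^ p₂) ≤
          ENNReal.ofReal (C * (1 + ‖ξ‖ ^ p₁ * (∫ y in unitCell n, χ₁ y) +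
            ‖ξ‖ ^ p₂ * (∫ y in unitCell n, (1 - χ₁ y)))) :=
  corrector_apriori_bound_general n σ₁ σ₂ p₁ p₂ hσ₁ hσ₂ hp₁ hp₁₂
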